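/- Let A be a probability matrix with lim_{n→∞} a_{n0} = 0 such that the pair (ΔA, AΔ) satisfies (*2C). If E is a reflexive locally convex Hausdorff topological vector space over ℂ, then a continuous linear operator T on E is A-ergodic if and only if T is A-bounded and AΔ-null. -/

import Mathlib

open Filter Finset Topology ZeroAtInfty
open scoped ENNReal ComplexOrder

noncomputable section

/-- An infinite matrix of complex numbers, with rows and columns indexed by `ℕ`. -/
abbrev Mat : Type := ℕ → ℕ → ℂ

/-- `A` is lower triangular: `A n k = 0` whenever `k > n`. -/
def Mat.LowerTri (A : Mat) : Prop := ∀ n k : ℕ, n < k → A n k = 0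

/-- The product of two (lower triangular) infinite matrices; for lower triangular
matrices all the sums involved are finite. -/
def Mat.mul (C A : Mat) : Mat := fun n k => ∑ j ∈ Finset.range (n + 1), C n j * A j k

/-- The identity matrix. -/
def Mat.one : Mat := fun n k => if n = k then 1 else 0

/-- The matrix `Δ`, with `Δ n n = 1`, `Δ n (n-1) = -1` (for `n ≥ 1`) and `0` elsewhere. -/
def Mat.delta : Mat := fun n i => (if n = i then 1 else 0) - (if n = i + 1 then 1 else 0)

/-- The `n`-th absolute row sum `∑_{i=0}^{n} |c_{ni}|` of a lower triangular matrix. -/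
def Mat.rowSum (C : Mat) (n : ℕ) : ℝ := ∑ i ∈ Finset.range (n + 1), ‖C n i‖

/-- Property (*C): the absolute row sums of `C` are (uniformly) bounded. -/
def Mat.StarC (C : Mat) : Prop := ∃ K : ℝ, ∀ n : ℕ, C.rowSum n ≤ K

/-- Property (*2C): (*C) together with: every column of `C` tends to `0`. -/
def Mat.Star2C (C : Mat) : Prop :=
  C.StarC ∧ ∀ i : ℕ, Tendsto (fun n => C n i) atTop (𝓝 (0 : ℂ))

/-- Property (*3C): the absolute row sums of `C` tend to `0`. -/
def Mat.Star3C (C : Mat) : Prop := Tendsto (fun n => C.rowSum n) atTop (𝓝 (0 : ℝ))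

/-- The pair `(A, B)` satisfies (*C): there is a lower triangular `C` with `CA = B`
whose absolute row sums are bounded. -/
def PairStarC (A B : Mat) : Prop := ∃ C : Mat, C.LowerTri ∧ Mat.mul C A = B ∧ C.StarC

/-- The pair `(A, B)` satisfies (*2C). -/
def PairStar2C (A B : Mat) : Prop := ∃ C : Mat, C.LowerTri ∧ Mat.mul C A = B ∧ C.Star2C

/-- The pair `(A, B)` satisfies (*3C). -/
def PairStar3C (A B : Mat) : Prop := ∃ C : Mat, C.LowerTri ∧ Mat.mul C A = B ∧ C.Star3C

/-- A probability matrix: lower triangular, nonnegative (real) entries, rows summing to `1`. -/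
def Mat.IsProb (A : Mat) : Prop :=
  A.LowerTri ∧ (∀ n k : ℕ, 0 ≤ A n k) ∧ ∀ n : ℕ, (∑ i ∈ Finset.range (n + 1), A n i) = 1

/-- The action of a lower triangular matrix on a sequence: `(Cx)_n = ∑_{i=0}^n c_{ni} x_i`. -/
def Mat.apply (C : Mat) (x : ℕ → ℂ) (n : ℕ) : ℂ := ∑ i ∈ Finset.range (n + 1), C n i * x i

section Ops

variable {E : Type*} [AddCommGroup E] [Module ℂ E] [UniformSpace E]
  [IsUniformAddGroup E] [ContinuousSMul ℂ E]

/-- `(A𝒯)_n = ∑_{i=0}^{n} a_{ni} T_i` for a sequence `𝒯` of continuous linear operators. -/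
def matOp (A : Mat) (T : ℕ → E →L[ℂ] E) (n : ℕ) : E →L[ℂ] E :=
  ∑ i ∈ Finset.range (n + 1), A n i • T i

/-- The sequence `𝒯` is `A`-bounded: `{(A𝒯)_n : n ∈ ℕ}` is equicontinuous. -/
def MatBounded (A : Mat) (T : ℕ → E →L[ℂ] E) : Prop :=
  Equicontinuous fun n => ⇑(matOp A T n)

/-- The sequence `𝒯` is `A`-null: `(A𝒯)_n x → 0` for every `x`. -/
def MatNull (A : Mat) (T : ℕ → E →L[ℂ] E) : Prop :=
  ∀ x : E, Tendsto (fun n => matOp A T n x) atTop (𝓝 (0 : E))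

/-- The sequence `𝒯` is `A`-ergodic: `(A𝒯)_n` converges pointwise to a continuous
linear operator `P`. -/
def MatErgodic (A : Mat) (T : ℕ → E →L[ℂ] E) : Prop :=
  ∃ P : E →L[ℂ] E, ∀ x : E, Tendsto (fun n => matOp A T n x) atTop (𝓝 (P x))

/-- `(AT)_n = ∑_{i=0}^{n} a_{ni} T^i` for a single operator `T`. -/
def matOpPow (A : Mat) (T : E →L[ℂ] E) (n : ℕ) : E →L[ℂ] E :=
  matOp A (fun i => T ^ i) n

/-- A single operator `T` is `A`-bounded if the sequence of its powers is. -/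
def OpBounded (A : Mat) (T : E →L[ℂ] E) : Prop := MatBounded A fun i => T ^ i

/-- A single operator `T` is `A`-null if the sequence of its powers is. -/
def OpNull (A : Mat) (T : E →L[ℂ] E) : Prop := MatNull A fun i => T ^ i

/-- A single operator `T` is `A`-ergodic if the sequence of its powers is. -/
def OpErgodic (A : Mat) (T : E →L[ℂ] E) : Prop := MatErgodic A fun i => T ^ i

end Ops

/-- `S(n, p) = ∑_{i=1}^{n} i^p`. -/
def Sp (p : ℝ) (n : ℕ) : ℝ := ∑ i ∈ Finset.range n, ((i : ℝ) + 1) ^ p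

/-- The probability matrix `M_p`, reindexed so that rows and columns start at `0`
(entry `(n, i)` here corresponds to entry `(n+1, i+1)` in the paper). -/
def Mp (p : ℝ) : Mat := fun n i =>
  if i ≤ n then ((((i : ℝ) + 1) ^ p / Sp p (n + 1) : ℝ) : ℂ) else 0

/-- The (lower triangular) inverse of `M_p`. -/
def MpInv (p : ℝ) : Mat := fun n i =>
  if i = n then ((Sp p (n + 1) / ((n : ℝ) + 1) ^ p : ℝ) : ℂ)
  else if i + 1 = n then ((-(Sp p n) / ((n : ℝ) + 1) ^ p : ℝ) : ℂ)
  else 0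

/-- The Banach space `ℓ∞` of bounded complex sequences with the sup norm. -/
abbrev ellInf : Type := ↥(lp (fun _ : ℕ => ℂ) ∞)

/-- The Banach space `c₀` of complex sequences tending to `0`, with the sup norm. -/
abbrev czero : Type := C₀(ℕ, ℂ)

section Helpers
open ContinuousLinearMap

lemma delta_mul_apply (A : Mat) (n k : ℕ) :
    Mat.mul Mat.delta A n k = A n k - (if n = 0 then 0 else A (n - 1) k) := by
  unfold Mat.mul Mat.delta
  simp only [sub_mul, Finset.sum_sub_distrib, ite_mul, one_mul, zero_mul]
  rw [Finset.sum_ite_eq (Finset.range (n + 1)) n (fun j => A j k)]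
  rcases n with _ | m
  · simp
  · rw [show m + 1 + 1 = m + 2 from rfl]
    have : ∀ j ∈ Finset.range (m + 2), (if m + 1 = j + 1 then A j k else 0)
        = if j = m then A j k else 0 := by
      intro j _
      by_cases h : j = m
      · simp [h]
      · simp [h, show m + 1 ≠ j + 1 by omega, Ne.symm h]
    rw [Finset.sum_congr rfl this, Finset.sum_ite_eq' (Finset.range (m + 2)) m (fun j => A j k)]
    simp [Finset.mem_range]

lemma mul_delta_apply (A : Mat) (hA : A.LowerTri) (n i : ℕ) :
    Mat.mul A Mat.delta n i = A n i - A n (i + 1) := by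
  unfold Mat.mul Mat.delta
  simp only [mul_sub, Finset.sum_sub_distrib, mul_ite, mul_one, mul_zero]
  rw [Finset.sum_ite_eq' (Finset.range (n + 1)) i (fun j => A n j),
    Finset.sum_ite_eq' (Finset.range (n + 1)) (i + 1) (fun j => A n j)]
  simp only [Finset.mem_range]
  split_ifs with h1 h2 h2
  · rfl
  · rw [hA n (i + 1) (by omega)]
  · omega
  · rw [hA n i (by omega), hA n (i + 1) (by omega)]

variable {E : Type*} [AddCommGroup E] [Module ℂ E] [UniformSpace E]
  [IsUniformAddGroup E] [ContinuousSMul ℂ E]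

lemma matOp_mul_eq (C A' : Mat) (hA' : A'.LowerTri) (T : ℕ → E →L[ℂ] E) (n : ℕ) :
    matOp (Mat.mul C A') T n = ∑ j ∈ Finset.range (n + 1), C n j • matOp A' T j := by
  unfold matOp Mat.mul
  simp only [Finset.sum_smul, Finset.smul_sum, smul_smul]
  rw [Finset.sum_comm]
  refine Finset.sum_congr rfl fun j hj => ?_
  symm
  apply Finset.sum_subset
  · intro i hi
    simp only [Finset.mem_range] at hi hj ⊢
    omega
  · intro i hi hni
    simp only [Finset.mem_range] at hi hni
    rw [hA' j i (by omega), mul_zero, zero_smul]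

lemma matOp_delta_mul (A : Mat) (hA : A.LowerTri) (T : ℕ → E →L[ℂ] E) (n : ℕ) :
    matOp (Mat.mul Mat.delta A) T (n + 1) = matOp A T (n + 1) - matOp A T n := by
  unfold matOp
  have h1 : ∀ i ∈ Finset.range (n + 1 + 1), Mat.mul Mat.delta A (n + 1) i • T i
      = A (n + 1) i • T i - A n i • T i := by
    intro i _
    rw [delta_mul_apply]
    simp [sub_smul]
  rw [Finset.sum_congr rfl h1, Finset.sum_sub_distrib]
  congr 1
  rw [Finset.sum_range_succ, hA n (n + 1) (by omega)]
  simp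

lemma matOpPow_comm (A : Mat) (T : E →L[ℂ] E) (n : ℕ) :
    T.comp (matOpPow A T n) = (matOpPow A T n).comp T := by
  rw [← ContinuousLinearMap.mul_def, ← ContinuousLinearMap.mul_def]
  unfold matOpPow matOp
  rw [Finset.mul_sum, Finset.sum_mul]
  refine Finset.sum_congr rfl fun i _ => ?_
  rw [mul_smul_comm, smul_mul_assoc, ← pow_succ', ← pow_succ]

lemma key_identity (A : Mat) (hA : A.LowerTri) (T : E →L[ℂ] E) (n : ℕ) :
    matOpPow A T n - (matOpPow A T n).comp T
      = A n 0 • (1 : E →L[ℂ] E) - T.comp (matOpPow (Mat.mul A Mat.delta) T n) := by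
  rw [← ContinuousLinearMap.mul_def, ← ContinuousLinearMap.mul_def]
  unfold matOpPow matOp
  have hAD : ∀ i ∈ Finset.range (n + 1), (Mat.mul A Mat.delta n i) • (T ^ i)
      = A n i • T ^ i - A n (i + 1) • T ^ i := by
    intro i _
    rw [mul_delta_apply A hA, sub_smul]
  rw [Finset.sum_congr rfl hAD, Finset.sum_sub_distrib, mul_sub]
  have e1 : T * ∑ i ∈ Finset.range (n + 1), A n i • T ^ i
      = ∑ i ∈ Finset.range (n + 1), A n i • T ^ (i + 1) := by
    rw [Finset.mul_sum]
    exact Finset.sum_congr rfl fun i _ => by rw [mul_smul_comm, ← pow_succ']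
  have e2 : T * ∑ i ∈ Finset.range (n + 1), A n (i + 1) • T ^ i
      = ∑ i ∈ Finset.range (n + 1), A n (i + 1) • T ^ (i + 1) := by
    rw [Finset.mul_sum]
    exact Finset.sum_congr rfl fun i _ => by rw [mul_smul_comm, ← pow_succ']
  have e3 : (∑ i ∈ Finset.range (n + 1), A n i • T ^ i) * T
      = ∑ i ∈ Finset.range (n + 1), A n i • T ^ (i + 1) := by
    rw [Finset.sum_mul]
    exact Finset.sum_congr rfl fun i _ => by rw [smul_mul_assoc, ← pow_succ]
  have e4 : ∑ i ∈ Finset.range (n + 1), A n (i + 1) • T ^ (i + 1)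
      = ∑ i ∈ Finset.range (n + 1), A n i • T ^ i - A n 0 • 1 := by
    have := Finset.sum_range_succ' (fun i => A n i • T ^ i) (n + 1)
    rw [Finset.sum_range_succ, hA n (n + 1) (by omega), zero_smul, add_zero] at this
    rw [this, pow_zero]
    abel
  rw [e1, e2, e3, e4]
  abel

lemma matOpPow_fixed (A : Mat) (hrow : ∀ n, (∑ i ∈ Finset.range (n + 1), A n i) = 1)
    (T : E →L[ℂ] E) {y : E} (hy : T y = y) (n : ℕ) : matOpPow A T n y = y := by
  have hpow : ∀ i : ℕ, (T ^ i) y = y := by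
    intro i
    induction i with
    | zero => simp
    | succ k ih => rw [pow_succ, ContinuousLinearMap.mul_apply, hy, ih]
  unfold matOpPow matOp
  rw [ContinuousLinearMap.sum_apply]
  simp only [ContinuousLinearMap.smul_apply, hpow]
  rw [← Finset.sum_smul, hrow n, one_smul]

lemma sub_matOpPow_mem (A : Mat) (hrow : ∀ n, (∑ i ∈ Finset.range (n + 1), A n i) = 1)
    (T : E →L[ℂ] E) (x : E) (n : ℕ) :
    ∃ w : E, x - matOpPow A T n x = w - T w := by
  refine ⟨∑ i ∈ Finset.range (n + 1), A n i • (∑ j ∈ Finset.range i, (T ^ j) x), ?_⟩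
  rw [map_sum]
  simp only [map_smul]
  rw [← Finset.sum_sub_distrib]
  have h1 : ∀ i ∈ Finset.range (n + 1),
      A n i • (∑ j ∈ Finset.range i, (T ^ j) x) - A n i • T (∑ j ∈ Finset.range i, (T ^ j) x)
        = A n i • (x - (T ^ i) x) := by
    intro i _
    rw [← smul_sub, map_sum]
    congr 1
    have h2 : ∀ j ∈ Finset.range i, T ((T ^ j) x) = (T ^ (j + 1)) x := by
      intro j _
      rw [pow_succ', ContinuousLinearMap.mul_apply]
    rw [Finset.sum_congr rfl h2, ← Finset.sum_sub_distrib,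
      Finset.sum_range_sub' (fun j => (T ^ j) x) i]
    simp
  rw [Finset.sum_congr rfl h1]
  simp only [smul_sub]
  rw [Finset.sum_sub_distrib, ← Finset.sum_smul, hrow n, one_smul]
  congr 1
  unfold matOpPow matOp
  rw [ContinuousLinearMap.sum_apply]
  simp only [ContinuousLinearMap.smul_apply]

lemma abs_convex_sum_mem {U : Set E} (hU0 : (0 : E) ∈ U)
    (hUb : Balanced ℂ U) (hUc : Convex ℝ U) (t : Finset ℕ) (c : ℕ → ℂ) (z : ℕ → E)
    (hc : ∑ i ∈ t, ‖c i‖ ≤ 1) (hz : ∀ i ∈ t, z i ∈ U) :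
    ∑ i ∈ t, c i • z i ∈ U := by
  classical
  set j : ℕ := t.sup id + 1 with hj
  have hjt : j ∉ t := fun h => by
    have := Finset.le_sup (f := id) h
    simp only [id_eq] at this
    omega
  set w : ℕ → ℝ := fun i => if i = j then 1 - ∑ i ∈ t, ‖c i‖ else ‖c i‖ with hw
  set p : ℕ → E := fun i =>
    if i = j then 0 else if c i = 0 then 0 else ((‖c i‖ : ℂ)⁻¹ * c i) • z i with hp
  have key : ∑ i ∈ insert j t, w i • p i ∈ U := by
    apply hUc.sum_mem
    · intro i hi
      rcases Finset.mem_insert.mp hi with rfl | hi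
      · simp only [hw, if_pos rfl]
        linarith
      · have hij : i ≠ j := fun h => hjt (h ▸ hi)
        simp [hw, hij, norm_nonneg]
    · rw [Finset.sum_insert hjt]
      have : ∀ i ∈ t, w i = ‖c i‖ := by
        intro i hi
        have hij : i ≠ j := fun h => hjt (h ▸ hi)
        simp [hw, hij]
      rw [Finset.sum_congr rfl this]
      simp [hw]
    · intro i hi
      rcases Finset.mem_insert.mp hi with rfl | hi
      · simp [hp, hU0]
      · have hij : i ≠ j := fun h => hjt (h ▸ hi)
        by_cases hci : c i = 0
        · simp [hp, hij, hci, hU0]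
        · simp only [hp, if_neg hij, if_neg hci]
          apply hUb.smul_mem _ (hz i hi)
          rw [norm_mul, norm_inv, Complex.norm_real, norm_norm,
            inv_mul_cancel₀ (norm_ne_zero_iff.mpr hci)]
  have heq : ∑ i ∈ insert j t, w i • p i = ∑ i ∈ t, c i • z i := by
    rw [Finset.sum_insert hjt]
    have h0 : w j • p j = 0 := by simp [hp]
    rw [h0, zero_add]
    refine Finset.sum_congr rfl fun i hi => ?_
    have hij : i ≠ j := fun h => hjt (h ▸ hi)
    by_cases hci : c i = 0
    · simp [hp, hw, hij, hci]
    · simp only [hp, hw, if_neg hij, if_neg hci]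
      rw [← Complex.coe_smul, smul_smul, ← mul_assoc,
        mul_inv_cancel₀ (by simpa using norm_ne_zero_iff.mpr hci), one_mul]
  rw [← heq]
  exact key

instance lcsComplexOfReal {F : Type*} [AddCommGroup F] [Module ℂ F] [TopologicalSpace F]
    [LocallyConvexSpace ℝ F] : LocallyConvexSpace ℂ F := by
  have hconv : ∀ s : Set F, Convex ℝ s → Convex ℂ s := by
    intro s hs a ha b hb α β hα hβ hαβ
    have hα' : α = ((α.re : ℝ) : ℂ) := Complex.ext rfl (by simp [(Complex.le_def.mp hα).2.symm])
    have hβ' : β = ((β.re : ℝ) : ℂ) := Complex.ext rfl (by simp [(Complex.le_def.mp hβ).2.symm])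
    rw [hα', hβ', Complex.coe_smul, Complex.coe_smul]
    refine hs ha hb (Complex.le_def.mp hα).1 (Complex.le_def.mp hβ).1 ?_
    have := congrArg Complex.re hαβ
    simpa using this
  rw [locallyConvexSpace_iff]
  intro x
  refine (LocallyConvexSpace.convex_basis (𝕜 := ℝ) x).to_hasBasis
    (fun s hs => ⟨s, ⟨hs.1, hconv s hs.2⟩, le_rfl⟩) (fun s hs => ?_)
  obtain ⟨t, ⟨htn, htc⟩, hts⟩ := (LocallyConvexSpace.convex_basis (𝕜 := ℝ) x).mem_iff.mp hs.1
  exact ⟨t, ⟨htn, htc⟩, hts⟩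

lemma toeplitz_null [LocallyConvexSpace ℝ E] {C : Mat} {K : ℝ}
    (hK : ∀ n, C.rowSum n ≤ K)
    (hcol : ∀ i, Tendsto (fun n => C n i) atTop (𝓝 (0 : ℂ)))
    {y : ℕ → E} (hy : Tendsto y atTop (𝓝 (0 : E))) :
    Tendsto (fun n => ∑ i ∈ Finset.range (n + 1), C n i • y i) atTop (𝓝 (0 : E)) := by
  have hK0 : 0 ≤ K := le_trans (Finset.sum_nonneg fun i _ => norm_nonneg _) (hK 0)
  have hKpos : (0 : ℝ) < K + 1 := by linarith
  rw [Filter.tendsto_def]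
  intro W hW
  obtain ⟨W', hW'mem, hW'⟩ := exists_nhds_zero_half hW
  obtain ⟨U, ⟨hUmem, hUb, hUc⟩, hUsub⟩ := (nhds_hasBasis_absConvex ℂ E).mem_iff.mp hW'mem
  have hU0 : (0 : E) ∈ U := mem_of_mem_nhds hUmem
  have hscaled : Tendsto (fun i => ((K + 1 : ℝ) : ℂ) • y i) atTop (𝓝 0) := by
    simpa using hy.const_smul (((K + 1 : ℝ) : ℂ))
  obtain ⟨N, hN⟩ := (hscaled.eventually_mem hUmem).exists_forall_of_atTop
  have hpart1 : Tendsto (fun n => ∑ i ∈ Finset.range N, C n i • y i) atTop (𝓝 0) := by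
    have := tendsto_finset_sum (Finset.range N)
      (fun i (_ : i ∈ Finset.range N) => (hcol i).smul_const (y i))
    simpa using this
  have hpart1' := hpart1.eventually_mem hW'mem
  have : ∀ᶠ n in atTop, (fun n => ∑ i ∈ Finset.range (n + 1), C n i • y i) n ∈ W := by
    filter_upwards [hpart1', eventually_ge_atTop N] with n h1 hn
    have hsub : Finset.range N ⊆ Finset.range (n + 1) := Finset.range_subset_range.mpr (by omega)
    have hsplit : ∑ i ∈ Finset.range (n + 1), C n i • y i
        = ∑ i ∈ Finset.range (n + 1) \ Finset.range N, C n i • y i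
          + ∑ i ∈ Finset.range N, C n i • y i := (Finset.sum_sdiff hsub).symm
    rw [hsplit]
    refine hW' _ (hUsub ?_) _ h1
    have hmem := abs_convex_sum_mem hU0 hUb (hUc.lift ℝ) (Finset.range (n + 1) \ Finset.range N)
      (fun i => C n i * ((K + 1 : ℝ) : ℂ)⁻¹) (fun i => ((K + 1 : ℝ) : ℂ) • y i) ?_ ?_
    · have : ∀ i ∈ Finset.range (n + 1) \ Finset.range N,
          (C n i * ((K + 1 : ℝ) : ℂ)⁻¹) • (((K + 1 : ℝ) : ℂ) • y i) = C n i • y i := by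
        intro i _
        rw [smul_smul, mul_assoc, inv_mul_cancel₀ (Complex.ofReal_ne_zero.mpr (ne_of_gt hKpos)), mul_one]
      rwa [Finset.sum_congr rfl this] at hmem
    · have h1' : ∑ i ∈ Finset.range (n + 1) \ Finset.range N, ‖C n i * ((K + 1 : ℝ) : ℂ)⁻¹‖
          = (∑ i ∈ Finset.range (n + 1) \ Finset.range N, ‖C n i‖) * (K + 1)⁻¹ := by
        rw [Finset.sum_mul]
        refine Finset.sum_congr rfl fun i _ => ?_
        rw [norm_mul, norm_inv, Complex.norm_real, Real.norm_eq_abs, abs_of_pos hKpos]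
      rw [h1']
      have h2' : ∑ i ∈ Finset.range (n + 1) \ Finset.range N, ‖C n i‖ ≤ K :=
        le_trans (Finset.sum_le_sum_of_subset_of_nonneg (Finset.sdiff_subset)
          (fun i _ _ => norm_nonneg _)) (hK n)
      calc (∑ i ∈ Finset.range (n + 1) \ Finset.range N, ‖C n i‖) * (K + 1)⁻¹
          ≤ K * (K + 1)⁻¹ := by
            apply mul_le_mul_of_nonneg_right h2' (by positivity)
        _ ≤ 1 := by
            rw [mul_inv_le_iff₀ hKpos]
            linarith
    · intro i hi
      simp only [Finset.mem_sdiff, Finset.mem_range] at hi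
      exact hN i (by omega)
  exact this

open scoped Uniformity in
lemma equicont_nhds' : True := trivial

lemma mapClusterPt_eq_of_tendsto {X : Type*} [TopologicalSpace X] [T2Space X]
    {c a : X} {v : ℕ → X} (h : MapClusterPt c atTop v) (hv : Tendsto v atTop (𝓝 a)) :
    c = a :=
  eq_of_nhds_neBot (h.clusterPt.mono hv)

lemma mapClusterPt_le {c u : ℝ} {v : ℕ → ℝ} (h : MapClusterPt c atTop v)
    (hv : ∀ n, v n ≤ u) : c ≤ u := by
  by_contra hlt
  push_neg at hlt
  obtain ⟨n, hn⟩ := (mapClusterPt_iff_frequently.mp h _ (Ioi_mem_nhds hlt)).exists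
  exact absurd (hv n) (not_le.mpr hn)

open scoped Uniformity in
lemma equicont_nhds {𝓕 : ℕ → E →L[ℂ] E} (h : Equicontinuous fun n => ⇑(𝓕 n))
    {W : Set E} (hW : W ∈ 𝓝 (0 : E)) :
    ∃ S ∈ 𝓝 (0 : E), ∀ n, ∀ v ∈ S, 𝓕 n v ∈ W := by
  have hU : {p : E × E | p.2 - p.1 ∈ W} ∈ 𝓤 E := by
    rw [uniformity_eq_comap_nhds_zero E]
    exact Filter.preimage_mem_comap hW
  have h2 := h 0 _ hU
  refine ⟨_, h2, fun n v hv => ?_⟩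
  have h3 := hv n
  simpa using h3

open scoped Pointwise in
lemma orbit_bounded {𝓕 : ℕ → E →L[ℂ] E} (h : Equicontinuous fun n => ⇑(𝓕 n)) (x : E) :
    Bornology.IsVonNBounded ℂ (Set.range fun n => 𝓕 n x) := by
  intro V hV
  obtain ⟨S, hS, hSV⟩ := equicont_nhds h hV
  have habs : Absorbs ℂ S {x} :=
    absorbent_iff_forall_absorbs_singleton.mp (absorbent_nhds_zero hS) x
  filter_upwards [habs, Bornology.eventually_ne_cobounded (0 : ℂ)] with c hc hc0
  rintro _ ⟨n, rfl⟩
  obtain ⟨s, hs, hx⟩ := hc (Set.mem_singleton x)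
  show (𝓕 n) x ∈ c • V
  rw [← hx, map_smul]
  exact Set.smul_mem_smul_set (hSV n s hs)

section Weak
variable [LocallyConvexSpace ℝ E] [T2Space E] [ContinuousSMul ℝ E]

example : Module ℝ E := inferInstance
example : IsScalarTower ℝ ℂ E := inferInstance
example : SMulCommClass ℝ ℂ E := inferInstance

lemma weak_eval_continuous (H : E →L[ℂ] ℂ) :
    Continuous fun z : WeakSpace ℂ E => H ((toWeakSpace ℂ E).symm z) := by
  exact WeakBilin.eval_continuous _ H

example : WithSeminorms (gaugeSeminormFamily ℂ E) := by
  exact with_gaugeSeminormFamily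

example (s : Set E) (hs : Convex ℝ s) (hc : IsClosed s) (x : E) (hx : x ∉ s) :
    ∃ (f : E →L[ℂ] ℂ) (u : ℝ), (∀ a ∈ s, RCLike.re (f a) < u) ∧ u < RCLike.re (f x) := by
  exact RCLike.geometric_hahn_banach_closed_point hs hc hx

example (g : ℕ → E →L[ℂ] E) (f : E → E)
    (h : Tendsto (fun n x => g n x) atTop (𝓝 f)) [BarrelledSpace ℂ E] :
    ∃ P : E →L[ℂ] E, ⇑P = f := by
  exact ⟨(with_gaugeSeminormFamily (𝕜 := ℂ) (E := E)).continuousLinearMapOfTendsto g h, rfl⟩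

end Weak


end Helpers

/-- For a probability matrix `A` with `a_{n0} → 0` such that `(ΔA, AΔ)` satisfies (*2C),
on a reflexive space (barrelled, and bounded sets relatively weakly compact) an operator
is `A`-ergodic iff it is `A`-bounded and `AΔ`-null. -/
theorem statement12 {E : Type*} [AddCommGroup E] [Module ℂ E] [UniformSpace E]
    [IsUniformAddGroup E] [ContinuousSMul ℂ E] [LocallyConvexSpace ℝ E] [T2Space E]
    [BarrelledSpace ℂ E]
    (hrefl : ∀ s : Set E, Bornology.IsVonNBounded ℂ s →
      IsCompact (closure (toWeakSpace ℂ E '' s)))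
    (A : Mat) (hA : A.IsProb) (h0 : Tendsto (fun n => A n 0) atTop (𝓝 (0 : ℂ)))
    (h2C : PairStar2C (Mat.mul Mat.delta A) (Mat.mul A Mat.delta))
    (T : E →L[ℂ] E) :
    OpErgodic A T ↔ (OpBounded A T ∧ OpNull (Mat.mul A Mat.delta) T) := by
  haveI : ContinuousSMul ℝ E := IsScalarTower.continuousSMul ℂ
  obtain ⟨hAtri, hApos, hArow⟩ := hA
  obtain ⟨C, hCtri, hCA, ⟨⟨K, hK⟩, hCcol⟩⟩ := h2C
  have hDAtri : (Mat.mul Mat.delta A).LowerTri := by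
    intro n k hnk
    rw [delta_mul_apply]
    rcases n with _ | m
    · simpa using hAtri 0 k hnk
    · rw [if_neg (by omega), hAtri (m + 1) k hnk]
      simp only [Nat.add_sub_cancel]
      rw [hAtri m k (by omega), sub_zero]
  have hq : WithSeminorms (gaugeSeminormFamily ℂ E) := with_gaugeSeminormFamily
  constructor
  · rintro ⟨P, hP⟩
    have hbd : OpBounded A T := by
      have H : ∀ (k : AbsConvexOpenSets ℂ E) (x : E),
          BddAbove (Set.range fun n => gaugeSeminormFamily ℂ E k (matOpPow A T n x)) := by
        intro k x
        exact (((hq.continuous_seminorm k).tendsto _).comp (hP x)).bddAbove_range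
      exact (hq.banach_steinhaus (𝓕 := fun n => matOpPow A T n) H).equicontinuous
    refine ⟨hbd, ?_⟩
    intro x
    have hg : Tendsto (fun j => matOp (Mat.mul Mat.delta A) (fun i => T ^ i) j x)
        atTop (𝓝 0) := by
      rw [← tendsto_add_atTop_iff_nat 1]
      have he : ∀ j, matOp (Mat.mul Mat.delta A) (fun i => T ^ i) (j + 1) x
          = matOpPow A T (j + 1) x - matOpPow A T j x := by
        intro j
        rw [matOp_delta_mul A hAtri]
        simp [ContinuousLinearMap.sub_apply, matOpPow]
      simp only [he]
      have h1 : Tendsto (fun j => matOpPow A T (j + 1) x) atTop (𝓝 (P x)) :=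
        (hP x).comp (tendsto_add_atTop_nat 1)
      simpa [matOpPow] using h1.sub (hP x)
    have htp := toeplitz_null (C := C) (K := K) hK hCcol hg
    have heq : ∀ n, matOp (Mat.mul A Mat.delta) (fun i => T ^ i) n x
        = ∑ j ∈ Finset.range (n + 1),
            C n j • (matOp (Mat.mul Mat.delta A) (fun i => T ^ i) j x) := by
      intro n
      rw [← hCA, matOp_mul_eq C _ hDAtri _ n]
      simp [ContinuousLinearMap.sum_apply, ContinuousLinearMap.smul_apply]
    exact (Filter.tendsto_congr heq).mpr htp
  · rintro ⟨hbd, hnull⟩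
    have hTMsub : ∀ v : E,
        Tendsto (fun n => matOpPow A T n v - T (matOpPow A T n v)) atTop (𝓝 0) := by
      intro v
      have hkey : ∀ n, matOpPow A T n v - T (matOpPow A T n v)
          = A n 0 • v - T (matOp (Mat.mul A Mat.delta) (fun i => T ^ i) n v) := by
        intro n
        have h1 := congrArg (fun S : E →L[ℂ] E => S v) (key_identity A hAtri T n)
        simp only [ContinuousLinearMap.sub_apply, ContinuousLinearMap.comp_apply,
          ContinuousLinearMap.smul_apply, ContinuousLinearMap.one_apply] at h1
        have h2 := congrArg (fun S : E →L[ℂ] E => S v) (matOpPow_comm A T n)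
        simp only [ContinuousLinearMap.comp_apply] at h2
        rw [← h2] at h1
        exact h1
      simp only [hkey]
      have h1 : Tendsto (fun n => A n 0 • v) atTop (𝓝 (0 : E)) := by
        simpa using h0.smul_const v
      have h2 : Tendsto
          (fun n => T (matOp (Mat.mul A Mat.delta) (fun i => T ^ i) n v)) atTop (𝓝 (0 : E)) := by
        simpa [Function.comp_def] using (T.continuous.tendsto 0).comp (hnull v)
      simpa using h1.sub h2
    set G : Set E := Set.range (fun w => w - T w) with hG
    have hGconv : Convex ℝ G := by
      rintro _ ⟨w1, rfl⟩ _ ⟨w2, rfl⟩ a b _ _ _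
      refine ⟨a • w1 + b • w2, ?_⟩
      show a • w1 + b • w2 - T (a • w1 + b • w2) = a • (w1 - T w1) + b • (w2 - T w2)
      rw [map_add, ContinuousLinearMap.map_smul_of_tower, ContinuousLinearMap.map_smul_of_tower]
      module
    have hMnG : ∀ z ∈ G, Tendsto (fun n => matOpPow A T n z) atTop (𝓝 0) := by
      rintro _ ⟨w, rfl⟩
      have he : ∀ n, matOpPow A T n (w - T w)
          = matOpPow A T n w - T (matOpPow A T n w) := by
        intro n
        rw [map_sub]
        congr 1
        have h2 := congrArg (fun S : E →L[ℂ] E => S w) (matOpPow_comm A T n)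
        simpa using h2.symm
      simpa only [he] using hTMsub w
    have hMnclos : ∀ z ∈ closure G, Tendsto (fun n => matOpPow A T n z) atTop (𝓝 0) := by
      intro z hz
      rw [Filter.tendsto_def]
      intro W hW
      obtain ⟨W', hW'mem, hW'⟩ := exists_nhds_zero_half hW
      obtain ⟨S, hS, hSW⟩ := equicont_nhds hbd hW'mem
      have hnb : {v | z - v ∈ S} ∈ 𝓝 z := by
        have hcont : ContinuousAt (fun v : E => z - v) z :=
          (continuous_const.sub continuous_id).continuousAt
        have := hcont.preimage_mem_nhds (by simpa using hS)
        exact this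
      obtain ⟨g, hgS, hgG⟩ := mem_closure_iff_nhds.mp hz _ hnb
      have h1 : ∀ n, matOpPow A T n (z - g) ∈ W' := fun n => hSW n _ hgS
      have h2 := (hMnG g hgG).eventually_mem hW'mem
      filter_upwards [h2] with n hn
      show matOpPow A T n z ∈ W
      have he : matOpPow A T n z = matOpPow A T n (z - g) + matOpPow A T n g := by
        rw [← map_add]
        congr 1
        abel
      rw [he]
      exact hW' _ (h1 n) _ hn
    have hconv : ∀ x : E, ∃ y : E,
        Tendsto (fun n => matOpPow A T n x) atTop (𝓝 y) := by
      intro x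
      have hb := orbit_bounded (𝓕 := fun n => matOpPow A T n) hbd x
      have hcpt := hrefl _ hb
      have hle : Filter.map (fun n : ℕ => toWeakSpaceCLM ℂ E (matOpPow A T n x)) atTop
          ≤ 𝓟 (closure (toWeakSpace ℂ E '' Set.range fun n => matOpPow A T n x)) := by
        rw [Filter.le_principal_iff, Filter.mem_map]
        refine Filter.mem_of_superset Filter.univ_mem ?_
        intro n _
        exact subset_closure ⟨matOpPow A T n x, ⟨n, rfl⟩, rfl⟩
      obtain ⟨yw, hyw_mem, hyw⟩ := hcpt.exists_mapClusterPt
        (u := fun n : ℕ => toWeakSpaceCLM ℂ E (matOpPow A T n x)) hle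
      set y : E := (toWeakSpace ℂ E).symm yw with hy
      have hcl : ∀ H : E →L[ℂ] ℂ,
          MapClusterPt (H y) atTop (fun n => H (matOpPow A T n x)) := by
        intro H
        have hc : Continuous fun z : WeakSpace ℂ E => H ((toWeakSpace ℂ E).symm z) :=
          weak_eval_continuous H
        have h := MapClusterPt.tendsto_comp
          (f := fun z : WeakSpace ℂ E => H ((toWeakSpace ℂ E).symm z))
          (y := H ((toWeakSpace ℂ E).symm yw)) (hc.tendsto yw) hyw
        exact h
      have hfix : T y = y := by
        by_contra hne
        obtain ⟨f, hf⟩ := RCLike.geometric_hahn_banach_point_point (𝕜 := ℂ) hne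
        have hH : (f.comp T - f) y = 0 := by
          have hcl' := hcl (f.comp T - f)
          have hten : Tendsto (fun n => (f.comp T - f) (matOpPow A T n x)) atTop (𝓝 0) := by
            have he : ∀ n, (f.comp T - f) (matOpPow A T n x)
                = - f (matOpPow A T n x - T (matOpPow A T n x)) := by
              intro n
              simp only [ContinuousLinearMap.sub_apply, ContinuousLinearMap.comp_apply, map_sub]
              ring
            simp only [he]
            simpa using ((f.continuous.tendsto 0).comp (hTMsub x)).neg
          exact mapClusterPt_eq_of_tendsto hcl' hten
        have hH' : f (T y) = f y := by
          simpa [ContinuousLinearMap.sub_apply, ContinuousLinearMap.comp_apply,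
            sub_eq_zero] using hH
        have : RCLike.re (f (T y)) = RCLike.re (f y) := by rw [hH']
        exact lt_irrefl _ (this ▸ hf)
      have hxy : x - y ∈ closure G := by
        by_contra hxyn
        obtain ⟨f, u, hfu, hufx⟩ := RCLike.geometric_hahn_banach_closed_point (𝕜 := ℂ)
          hGconv.closure isClosed_closure hxyn
        have h1 := (hcl f).continuousAt_comp (RCLike.continuous_re.continuousAt)
        have h2 := h1.continuousAt_comp (f := fun t : ℝ => RCLike.re (f x) - t)
          ((continuous_const.sub continuous_id).continuousAt)
        have hle' : RCLike.re (f x) - RCLike.re (f y) ≤ u := by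
          refine mapClusterPt_le h2 fun n => ?_
          have hmem : x - matOpPow A T n x ∈ G := by
            obtain ⟨w, hw⟩ := sub_matOpPow_mem A hArow T x n
            exact ⟨w, hw.symm⟩
          have h3 := hfu _ (subset_closure hmem)
          have h4 : RCLike.re (f (x - matOpPow A T n x))
              = RCLike.re (f x) - RCLike.re (f (matOpPow A T n x)) := by
            rw [map_sub, map_sub]
          show RCLike.re (f x) - RCLike.re (f (matOpPow A T n x)) ≤ u
          rw [← h4]
          exact le_of_lt h3
        have h5 : RCLike.re (f (x - y)) = RCLike.re (f x) - RCLike.re (f y) := by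
          rw [map_sub, map_sub]
        rw [h5] at hufx
        linarith
      refine ⟨y, ?_⟩
      have htend0 := hMnclos _ hxy
      have he : ∀ n, matOpPow A T n x = matOpPow A T n (x - y) + y := by
        intro n
        rw [map_sub, matOpPow_fixed A hArow T hfix n]
        abel
      simp only [he]
      simpa using htend0.add_const y
    choose yy htend using hconv
    have hTen : Tendsto (fun n x => matOpPow A T n x) atTop (𝓝 (fun x => yy x)) := by
      rw [tendsto_pi_nhds]
      exact fun x => htend x
    refine ⟨hq.continuousLinearMapOfTendsto (fun n => matOpPow A T n) hTen, ?_⟩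
    intro x
    exact htend x
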